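/- arXiv:2506.17660 — 9 statements merged into one kernel-verified Lean document; each statement's English description precedes it below -/
import Mathlib

section
/- Let n ≥ 1, let G be an n×n real matrix with nonnegative entries, zero diagonal, and row sums d_i^out = Σ_{j≠i} G i j < 1 for every i, and let γ ∈ (0,1). Suppose vectors bʸ, bˣ ∈ ℝⁿ satisfy, for every i: bʸ_i − Σ_{j≠i} G i j · bʸ_j − (1−γ)·Σ_{j≠i} G i j · bˣ_j = (1−γ)(1 − d_i^out) and bˣ_i − γ·Σ_{j≠i} G i j · bˣ_j = γ(1 − d_i^out). Then bʸ_i + bˣ_i = 1 for every i, and bʸ = (1−γ)·(I − γ·G)⁻¹ 𝟙. -/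
open Matrix Finset

/-- If the slopes `bʸ, bˣ` solve the coefficient-matching systems of the
beauty contest game, then `bʸ_i + bˣ_i = 1` for every `i` and
`bʸ = (1-γ) • (I - γ•G)⁻¹ 𝟙`. -/
theorem stmt2 (n : ℕ) (hn : 1 ≤ n) (G : Matrix (Fin n) (Fin n) ℝ)
    (hpos : ∀ i j, 0 ≤ G i j) (hdiag : ∀ i, G i i = 0)
    (hrow : ∀ i, ∑ j ∈ Finset.univ.erase i, G i j < 1)
    (γ : ℝ) (hγ : γ ∈ Set.Ioo (0 : ℝ) 1)
    (by' bx : Fin n → ℝ)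
    (hy : ∀ i, by' i - ∑ j ∈ Finset.univ.erase i, G i j * by' j
        - (1 - γ) * ∑ j ∈ Finset.univ.erase i, G i j * bx j
        = (1 - γ) * (1 - ∑ j ∈ Finset.univ.erase i, G i j))
    (hx : ∀ i, bx i - γ * ∑ j ∈ Finset.univ.erase i, G i j * bx j
        = γ * (1 - ∑ j ∈ Finset.univ.erase i, G i j)) :
    (∀ i, by' i + bx i = 1) ∧
    by' = (1 - γ) • ((1 - γ • G)⁻¹ *ᵥ fun _ => 1) := by
  obtain ⟨hγ0, hγ1⟩ := hγ
  have herase : ∀ (f : Fin n → ℝ) (i : Fin n),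
      ∑ j ∈ Finset.univ.erase i, G i j * f j = ∑ j, G i j * f j := by
    intro f i
    rw [Finset.sum_erase_eq_sub (Finset.mem_univ i), hdiag i, zero_mul, sub_zero]
  have herase1 : ∀ i : Fin n, ∑ j ∈ Finset.univ.erase i, G i j = ∑ j, G i j := by
    intro i
    rw [Finset.sum_erase_eq_sub (Finset.mem_univ i), hdiag i, sub_zero]
  -- part 1: bʸ + bˣ = 1
  have expand1 : ∀ (v : Fin n → ℝ) (i : Fin n),
      ((1 - G) *ᵥ v) i = v i - ∑ j, G i j * v j := by
    intro v i
    rw [Matrix.sub_mulVec, Pi.sub_apply, Matrix.one_mulVec]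
    simp [Matrix.mulVec, dotProduct]
  have hdet1 : (1 - G).det ≠ 0 := by
    apply det_ne_zero_of_sum_row_lt_diag
    intro k
    have h1 : ∀ j ∈ Finset.univ.erase k, ‖(1 - G) k j‖ = G k j := by
      intro j hj
      have hjk : j ≠ k := Finset.ne_of_mem_erase hj
      simp [Matrix.sub_apply, Matrix.one_apply_ne' hjk, abs_of_nonneg (hpos k j),
        Real.norm_eq_abs]
    rw [Finset.sum_congr rfl h1]
    have h2 : (1 - G) k k = 1 := by simp [Matrix.sub_apply, hdiag k]
    rw [h2]
    simpa using hrow k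
  have hinj : Function.Injective ((1 - G).mulVec) := by
    intro u v huv
    have hu : (1 - G)⁻¹ *ᵥ ((1 - G) *ᵥ u) = (1 - G)⁻¹ *ᵥ ((1 - G) *ᵥ v) := by rw [huv]
    rwa [Matrix.mulVec_mulVec, Matrix.mulVec_mulVec,
      Matrix.nonsing_inv_mul _ (isUnit_iff_ne_zero.mpr hdet1), Matrix.one_mulVec,
      Matrix.one_mulVec] at hu
  have hsum : ∀ i, by' i + bx i = 1 := by
    have key : (1 - G) *ᵥ (fun i => by' i + bx i) = (1 - G) *ᵥ (fun _ => 1) := by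
      funext i
      have h1 := hy i
      have h2 := hx i
      rw [expand1, expand1]
      rw [herase by', herase bx, herase1 i] at h1
      rw [herase bx, herase1 i] at h2
      have e1 : ∑ j, G i j * (by' j + bx j) = (∑ j, G i j * by' j) + ∑ j, G i j * bx j := by
        rw [← Finset.sum_add_distrib]; congr 1; funext j; ring
      have e2 : ∑ j, G i j * (1 : ℝ) = ∑ j, G i j := by simp
      rw [e1, e2]
      nlinarith [h1, h2]
    have := hinj key
    intro i
    exact congrFun this i
  refine ⟨hsum, ?_⟩
  -- part 2
  set A : Matrix (Fin n) (Fin n) ℝ := 1 - γ • G with hA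
  have expandA : ∀ (v : Fin n → ℝ) (i : Fin n),
      (A *ᵥ v) i = v i - γ * ∑ j, G i j * v j := by
    intro v i
    rw [hA, Matrix.sub_mulVec, Pi.sub_apply, Matrix.one_mulVec, Matrix.smul_mulVec,
      Pi.smul_apply, smul_eq_mul]
    simp [Matrix.mulVec, dotProduct]
  have hdetA : A.det ≠ 0 := by
    apply det_ne_zero_of_sum_row_lt_diag
    intro k
    have h1 : ∀ j ∈ Finset.univ.erase k, ‖A k j‖ = γ * G k j := by
      intro j hj
      have hjk : j ≠ k := Finset.ne_of_mem_erase hj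
      simp [hA, Matrix.sub_apply, Matrix.smul_apply, Matrix.one_apply_ne' hjk,
        Real.norm_eq_abs, abs_of_nonneg hγ0.le, abs_of_nonneg (hpos k j), smul_eq_mul,
        abs_mul]
    rw [Finset.sum_congr rfl h1]
    have hAkk : A k k = 1 := by simp [hA, Matrix.sub_apply, Matrix.smul_apply, hdiag k]
    rw [hAkk, ← Finset.mul_sum]
    simp only [norm_one]
    calc γ * ∑ j ∈ Finset.univ.erase k, G k j
        ≤ 1 * ∑ j ∈ Finset.univ.erase k, G k j := by
          apply mul_le_mul_of_nonneg_right hγ1.le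
          exact Finset.sum_nonneg fun j _ => hpos k j
      _ = ∑ j ∈ Finset.univ.erase k, G k j := one_mul _
      _ < 1 := hrow k
  have hAby : A *ᵥ by' = fun _ => (1 - γ : ℝ) := by
    funext i
    have h2 := hx i
    rw [herase bx, herase1 i] at h2
    rw [expandA]
    have hby : ∀ j, by' j = 1 - bx j := fun j => by linarith [hsum j]
    have e1 : ∑ j, G i j * by' j = (∑ j, G i j) - ∑ j, G i j * bx j := by
      rw [← Finset.sum_sub_distrib]
      congr 1; funext j; rw [hby j]; ring
    rw [hby i, e1]
    nlinarith [h2]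
  have : by' = A⁻¹ *ᵥ (A *ᵥ by') := by
    rw [Matrix.mulVec_mulVec, Matrix.nonsing_inv_mul _ (isUnit_iff_ne_zero.mpr hdetA),
      Matrix.one_mulVec]
  rw [this, hAby]
  have : (fun _ : Fin n => (1 - γ : ℝ)) = (1 - γ) • (fun _ : Fin n => (1 : ℝ)) := by
    funext j; simp
  rw [this, Matrix.mulVec_smul]
end

section
/- Fix n ≥ 1, τ_x > 0, τ_y > 0, and set γ = τ_x/(τ_x+τ_y). Let G be an n×n real matrix with nonnegative entries, zero diagonal, and row sums d_i^out = Σ_{j≠i} G i j < 1, let c = (I − γ·G)⁻¹ 𝟙, and set b_i = (1−γ)·c_i. Let ε_1, …, ε_n, ε_0 be jointly independent square-integrable real random variables on a probability space, each with mean zero, with Var(ε_i) = 1/τ_x for 1 ≤ i ≤ n and Var(ε_0) = 1/τ_y, and define X_i = (1−b_i)·ε_i + b_i·ε_0. Then for every i: E[−(1−d_i^out)·X_i² − Σ_{j≠i} G i j ·(X_i − X_j)²] = τ_x⁻¹(1−γ)·( c_i² − Σ_{j≠i} G i j · c_j·(c_j − 2) ) − τ_x⁻¹(1 + d_i^out).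 -/
/-!
Each `X p` is a linear combination of independent centred noises, so its second moments are
`E[X p * X q] = [p = q] (1 - b p)² / τx + b p * b q / τy`, and the expected payoff is a linear
function of them. After substituting `b = (1 - γ) c` and using `γ / τx = (1 - γ) / τy`, the only
term not already of the required form is `γ c_i Σ_j G i j c_j`, which the Katz–Bonacich equation
`c_i = 1 + γ Σ_j G i j c_j` turns into `c_i (c_i - 1)`. That equation needs `1 - γ G` to be
invertible, which holds because it is strictly diagonally dominant.
-/

open Matrix Finset MeasureTheory ProbabilityTheory

section KatzBonacich

variable {n : Type*} [Fintype n] [DecidableEq n] {G : Matrix n n ℝ}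

theorem Matrix.det_one_sub_smul_ne_zero (hdiag : ∀ i, G i i = 0)
    (hrow : ∀ i, ∑ j ∈ univ.erase i, |G i j| < 1) {γ : ℝ} (hγ : |γ| ≤ 1) :
    (1 - γ • G).det ≠ 0 := by
  refine det_ne_zero_of_sum_row_lt_diag fun k => ?_
  have hoff : ∀ j ∈ univ.erase k, ‖(1 - γ • G) k j‖ = |γ| * |G k j| := fun j hj => by
    simp [one_apply_ne' (ne_of_mem_erase hj)]
  rw [sum_congr rfl hoff, ← mul_sum]
  simpa [hdiag k] using
    (mul_le_of_le_one_left (sum_nonneg fun j _ => abs_nonneg (G k j)) hγ).trans_lt (hrow k)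

theorem katzBonacich_eq_one_add (hdiag : ∀ i, G i i = 0) {γ : ℝ} (hdet : (1 - γ • G).det ≠ 0)
    {c : n → ℝ} (hc : c = (1 - γ • G)⁻¹ *ᵥ fun _ => 1) (i : n) :
    c i = 1 + γ * ∑ j ∈ univ.erase i, G i j * c j := by
  have hfix : (1 - γ • G) *ᵥ c = fun _ => 1 := by
    rw [hc, mulVec_mulVec, mul_nonsing_inv _ (isUnit_iff_ne_zero.mpr hdet), one_mulVec]
  have hi := congrFun hfix i
  rw [sub_mulVec, one_mulVec, smul_mulVec] at hi
  rw [sum_erase univ (by simp [hdiag i])]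
  simp only [Pi.sub_apply, Pi.smul_apply, smul_eq_mul, mulVec, dotProduct] at hi
  linarith

end KatzBonacich

section SecondMoments

variable {Ω ι : Type*} [MeasurableSpace Ω] {μ : Measure Ω}

theorem integral_sub_sq {X Y : Ω → ℝ} (hX : MemLp X 2 μ) (hY : MemLp Y 2 μ) :
    ∫ ω, (X ω - Y ω) ^ 2 ∂μ
      = ∫ ω, X ω * X ω ∂μ - 2 * ∫ ω, X ω * Y ω ∂μ + ∫ ω, Y ω * Y ω ∂μ := by
  have hXX : Integrable (fun ω => X ω * X ω) μ := hX.integrable_mul hX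
  have hXY : Integrable (fun ω => 2 * (X ω * Y ω)) μ := (hX.integrable_mul hY).const_mul 2
  have hYY : Integrable (fun ω => Y ω * Y ω) μ := hY.integrable_mul hY
  have hexpand : (fun ω => (X ω - Y ω) ^ 2) = fun ω => X ω * X ω - 2 * (X ω * Y ω) + Y ω * Y ω :=
    funext fun ω => by ring
  have hXXY : Integrable (fun ω => X ω * X ω - 2 * (X ω * Y ω)) μ := hXX.sub hXY
  rw [hexpand, integral_add hXXY hYY, integral_sub hXX hXY, integral_const_mul]

theorem integral_neg_mul_sq_sub_sum_mul_sub_sq {X : ι → Ω → ℝ}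
    (hX : ∀ p, MemLp (X p) 2 μ) (r : ℝ) (s : Finset ι) (g : ι → ℝ) (i : ι) :
    ∫ ω, (-r * X i ω ^ 2 - ∑ j ∈ s, g j * (X i ω - X j ω) ^ 2) ∂μ
      = -r * ∫ ω, X i ω * X i ω ∂μ - ∑ j ∈ s, g j *
          (∫ ω, X i ω * X i ω ∂μ - 2 * ∫ ω, X i ω * X j ω ∂μ + ∫ ω, X j ω * X j ω ∂μ) := by
  have hsq : ∀ j, Integrable (fun ω => g j * (X i ω - X j ω) ^ 2) μ :=
    fun j => ((hX i).sub (hX j)).integrable_sq.const_mul _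
  rw [integral_sub ((hX i).integrable_sq.const_mul _) (integrable_finsetSum _ fun j _ => hsq j),
    integral_const_mul, integral_finsetSum _ fun j _ => hsq j]
  congr 1
  · simp only [pow_two]
  · exact sum_congr rfl fun j _ => by rw [integral_const_mul, integral_sub_sq (hX i) (hX j)]

variable [IsProbabilityMeasure μ]

section Centred

variable {ε : ι → Ω → ℝ}

theorem integral_mul_eq_ite_variance [DecidableEq ι] (hindep : iIndepFun ε μ)
    (hL2 : ∀ k, MemLp (ε k) 2 μ) (hmean : ∀ k, ∫ ω, ε k ω ∂μ = 0) (j k : ι) :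
    ∫ ω, ε j ω * ε k ω ∂μ = if j = k then variance (ε j) μ else 0 := by
  split_ifs with hjk
  · subst hjk
    simp [variance_eq_sub (hL2 j), hmean j, pow_two]
  · have := (hindep.indepFun hjk).integral_mul_eq_mul_integral
      (hL2 j).aestronglyMeasurable (hL2 k).aestronglyMeasurable
    simpa [hmean j, hmean k] using this

theorem integral_sum_mul_sum_eq_sum_variance [Fintype ι] [DecidableEq ι] (hindep : iIndepFun ε μ)
    (hL2 : ∀ k, MemLp (ε k) 2 μ) (hmean : ∀ k, ∫ ω, ε k ω ∂μ = 0) (a a' : ι → ℝ) :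
    ∫ ω, (∑ k, a k * ε k ω) * (∑ l, a' l * ε l ω) ∂μ = ∑ k, a k * a' k * variance (ε k) μ := by
  have hmul (k l) : Integrable (fun ω => a k * a' l * (ε k ω * ε l ω)) μ :=
    ((hL2 k).integrable_mul (hL2 l)).const_mul _
  have hexpand (ω) : (∑ k, a k * ε k ω) * (∑ l, a' l * ε l ω)
      = ∑ k, ∑ l, a k * a' l * (ε k ω * ε l ω) := by
    rw [sum_mul_sum]
    exact sum_congr rfl fun k _ => sum_congr rfl fun l _ => mul_mul_mul_comm _ _ _ _
  simp_rw [hexpand]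
  rw [integral_finsetSum _ fun k _ => integrable_finsetSum _ fun l _ => hmul k l]
  simp_rw [integral_finsetSum _ fun l _ => hmul _ l, integral_const_mul,
    integral_mul_eq_ite_variance hindep hL2 hmean, mul_ite, mul_zero, sum_ite_eq]
  simp

end Centred

theorem integral_mul_of_private_common_noise [Fintype ι] [DecidableEq ι]
    {ε : Option ι → Ω → ℝ} (hindep : iIndepFun ε μ) (hL2 : ∀ k, MemLp (ε k) 2 μ)
    (hmean : ∀ k, ∫ ω, ε k ω ∂μ = 0) {σ σ₀ : ℝ} (hvar : ∀ i, variance (ε (some i)) μ = σ)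
    (hvar₀ : variance (ε none) μ = σ₀) {b : ι → ℝ} {X : ι → Ω → ℝ}
    (hX : ∀ i ω, X i ω = (1 - b i) * ε (some i) ω + b i * ε none ω) (p q : ι) :
    ∫ ω, X p ω * X q ω ∂μ = (if p = q then (1 - b p) ^ 2 * σ else 0) + b p * b q * σ₀ := by
  let w (i : ι) (k : Option ι) : ℝ := k.elim (b i) (Pi.single i (1 - b i))
  have hw (i ω) : X i ω = ∑ k, w i k * ε k ω := by
    simp [w, hX, Fintype.sum_option, Pi.single_apply, add_comm]
  simp_rw [hw, integral_sum_mul_sum_eq_sum_variance hindep hL2 hmean, Fintype.sum_option]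
  by_cases hpq : p = q
  · subst hpq
    simp only [w, Option.elim_none, Option.elim_some, Pi.single_apply, mul_ite, ite_mul,
      zero_mul, mul_zero, sum_ite_eq', mem_univ, if_true, hvar, hvar₀]
    ring
  · simp [w, hvar, hvar₀, Pi.single_apply, hpq, Ne.symm hpq]

end SecondMoments

theorem payoff_eq_of_second_moments {ι : Type*} [DecidableEq ι] {s : Finset ι} {i : ι}
    (hi : i ∉ s) {g b c : ι → ℝ} {γ σ σ₀ : ℝ} (hσ : γ * σ = (1 - γ) * σ₀)
    (hb : ∀ p, b p = (1 - γ) * c p) (hci : c i = 1 + γ * ∑ j ∈ s, g j * c j)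
    {M : ι → ι → ℝ}
    (hM : ∀ p q, M p q = (if p = q then (1 - b p) ^ 2 * σ else 0) + b p * b q * σ₀) :
    -(1 - ∑ j ∈ s, g j) * M i i - ∑ j ∈ s, g j * (M i i - 2 * M i j + M j j)
      = σ * (1 - γ) * (c i ^ 2 - ∑ j ∈ s, g j * (c j * (c j - 2))) - σ * (1 + ∑ j ∈ s, g j) := by
  have hterm : ∀ j ∈ s, g j * (M i i - 2 * M i j + M j j) = (M i i + σ) * g j
      + (1 - γ) * σ * (g j * (c j * (c j - 2))) - 2 * (1 - γ) * σ * c i * γ * (g j * c j) := by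
    intro j hj
    rw [hM i j, hM j j, if_neg (ne_of_mem_of_not_mem hj hi).symm, if_pos rfl, hb i, hb j]
    linear_combination -g j * (1 - γ) * (c j ^ 2 - 2 * c i * c j) * hσ
  rw [sum_congr rfl hterm, sum_sub_distrib, sum_add_distrib, ← mul_sum, ← mul_sum, ← mul_sum,
    hM i i, if_pos rfl, hb i]
  linear_combination (1 - γ) * c i ^ 2 * hσ - 2 * (1 - γ) * σ * c i * hci

theorem stmt4_general (n : ℕ) (τx τy : ℝ) (hτx : 0 < τx) (hτy : 0 < τy)
    (γ : ℝ) (hγ : γ = τx / (τx + τy))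
    (G : Matrix (Fin n) (Fin n) ℝ)
    (hposG : ∀ i j, 0 ≤ G i j) (hdiag : ∀ i, G i i = 0)
    (hrow : ∀ i, ∑ j ∈ Finset.univ.erase i, G i j < 1)
    (c : Fin n → ℝ) (hc : c = (1 - γ • G)⁻¹ *ᵥ fun _ => 1)
    (b : Fin n → ℝ) (hb : ∀ i, b i = (1 - γ) * c i)
    {Ω : Type*} [MeasurableSpace Ω] (μ : Measure Ω) [IsProbabilityMeasure μ]
    (ε : Option (Fin n) → Ω → ℝ)
    (hindep : iIndepFun ε μ)
    (hL2 : ∀ k, MemLp (ε k) 2 μ)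
    (hmean : ∀ k, ∫ ω, ε k ω ∂μ = 0)
    (hvarx : ∀ i : Fin n, variance (ε (some i)) μ = 1 / τx)
    (hvary : variance (ε none) μ = 1 / τy)
    (X : Fin n → Ω → ℝ)
    (hX : ∀ i ω, X i ω = (1 - b i) * ε (some i) ω + b i * ε none ω) :
    ∀ i, (∫ ω, (-(1 - ∑ j ∈ Finset.univ.erase i, G i j) * (X i ω) ^ 2
          - ∑ j ∈ Finset.univ.erase i, G i j * (X i ω - X j ω) ^ 2) ∂μ)
      = τx⁻¹ * (1 - γ) * ((c i) ^ 2
            - ∑ j ∈ Finset.univ.erase i, G i j * (c j * (c j - 2)))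
        - τx⁻¹ * (1 + ∑ j ∈ Finset.univ.erase i, G i j) := by
  intro i
  have hτ : γ * τx⁻¹ = (1 - γ) * τy⁻¹ := by
    rw [hγ]
    field_simp
    ring
  have hγ_abs : |γ| ≤ 1 := by
    rw [hγ, abs_of_pos (by positivity), div_le_one (by positivity)]
    linarith
  have hdet := det_one_sub_smul_ne_zero hdiag
    (fun k => (sum_congr rfl fun j _ => abs_of_nonneg (hposG k j)).trans_lt (hrow k)) hγ_abs
  have hXL2 (p) : MemLp (X p) 2 μ := by
    rw [show X p = _ from funext (hX p)]
    exact ((hL2 _).const_mul _).add ((hL2 _).const_mul _)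
  rw [integral_neg_mul_sq_sub_sum_mul_sub_sq hXL2]
  exact payoff_eq_of_second_moments (notMem_erase i univ) hτ hb (katzBonacich_eq_one_add hdiag hdet hc i)
    (integral_mul_of_private_common_noise hindep hL2 hmean (fun p => (hvarx p).trans (one_div τx))
      (hvary.trans (one_div τy)) hX)

/-- Agent `i`'s ex-ante equilibrium payoff in the networked beauty
contest equals `τx⁻¹(1-γ)(c_i² - Σ_{j≠i} g_ij c_j (c_j - 2)) - τx⁻¹(1 + d_i^out)`. -/
theorem stmt4 (n : ℕ) (hn : 1 ≤ n) (τx τy : ℝ) (hτx : 0 < τx) (hτy : 0 < τy)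
    (γ : ℝ) (hγ : γ = τx / (τx + τy))
    (G : Matrix (Fin n) (Fin n) ℝ)
    (hposG : ∀ i j, 0 ≤ G i j) (hdiag : ∀ i, G i i = 0)
    (hrow : ∀ i, ∑ j ∈ Finset.univ.erase i, G i j < 1)
    (c : Fin n → ℝ) (hc : c = (1 - γ • G)⁻¹ *ᵥ fun _ => 1)
    (b : Fin n → ℝ) (hb : ∀ i, b i = (1 - γ) * c i)
    {Ω : Type*} [MeasurableSpace Ω] (μ : Measure Ω) [IsProbabilityMeasure μ]
    (ε : Option (Fin n) → Ω → ℝ)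
    (hindep : iIndepFun ε μ)
    (hL2 : ∀ k, MemLp (ε k) 2 μ)
    (hmean : ∀ k, ∫ ω, ε k ω ∂μ = 0)
    (hvarx : ∀ i : Fin n, variance (ε (some i)) μ = 1 / τx)
    (hvary : variance (ε none) μ = 1 / τy)
    (X : Fin n → Ω → ℝ)
    (hX : ∀ i ω, X i ω = (1 - b i) * ε (some i) ω + b i * ε none ω) :
    ∀ i, (∫ ω, (-(1 - ∑ j ∈ Finset.univ.erase i, G i j) * (X i ω) ^ 2
          - ∑ j ∈ Finset.univ.erase i, G i j * (X i ω - X j ω) ^ 2) ∂μ)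
      = τx⁻¹ * (1 - γ) * ((c i) ^ 2
            - ∑ j ∈ Finset.univ.erase i, G i j * (c j * (c j - 2)))
        - τx⁻¹ * (1 + ∑ j ∈ Finset.univ.erase i, G i j) :=
  stmt4_general n τx τy hτx hτy γ hγ G hposG hdiag hrow c hc b hb μ ε hindep hL2 hmean hvarx hvary X
    hX
end

section
/- Let n ≥ 2 and γ ∈ (0,1). Suppose either (1) G is an n×n real matrix with nonnegative entries, zero diagonal, and row sums equal to 1, r ∈ (0,1), G̃ = r·G, c = (I − γ·G̃)⁻¹ 𝟙, and d_i = r·Σ_{j≠i} G j i; or (2) r_1, …, r_n ∈ (0,1), G̃ is the n×n matrix with zero diagonal and off-diagonal entries G̃ i j = r_i/(n−1), c = (I − γ·G̃)⁻¹ 𝟙, and d_i = (Σ_{j≠i} r_j)/(n−1). Then in either case Σ_{i=1}^{n} c_i·( (1 − d_i)·c_i + 2·d_i ) > 0. -/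
open Matrix Finset

/-!
With `B = γ G̃` entrywise nonnegative with row sums `< 1`, the vector `c` solves `(1 - B) c = 𝟙`;
at a coordinate where `c` is smallest this gives `(1 - rowsum) c_min ≥ 1`, so `c > 0`.
On the uniform network each in-degree `d_i` is an average of intensities, hence lies in `[0, 1]`,
and every summand is positive since `(1 - d) c + 2 d` is a convex combination of `c` and `2`.
On a row-stochastic network with common intensity `r`, `c` is the constant `k = (1 - γ r)⁻¹`; the
in-degrees may exceed `1`, but they sum to `r n`, so the sum is `n k ((1 - r) k + 2 r) > 0`.
-/

namespace Matrix

variable {ι : Type*} [Fintype ι] [DecidableEq ι] {B : Matrix ι ι ℝ}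

theorem det_one_sub_ne_zero_of_nonneg_of_rowSum_lt_one (hB : ∀ i j, 0 ≤ B i j)
    (hrow : ∀ i, ∑ j, B i j < 1) : (1 - B).det ≠ 0 := by
  refine det_ne_zero_of_sum_row_lt_diag fun k => ?_
  have hoff : ∀ j ∈ univ.erase k, ‖(1 - B) k j‖ = B k j := fun j hj => by
    rw [sub_apply, one_apply_ne (ne_of_mem_erase hj).symm, zero_sub, norm_neg,
      Real.norm_of_nonneg (hB k j)]
  have hsplit := add_sum_erase univ (B k) (mem_univ k)
  rw [sum_congr rfl hoff, sub_apply, one_apply_eq]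
  calc ∑ j ∈ univ.erase k, B k j < 1 - B k k := by linarith [hrow k]
    _ ≤ ‖1 - B k k‖ := Real.le_norm_self _

theorem mulVec_nonsing_inv_mulVec {A : Matrix ι ι ℝ} (hdet : A.det ≠ 0) (v : ι → ℝ) :
    A *ᵥ (A⁻¹ *ᵥ v) = v := by
  rw [mulVec_mulVec, mul_nonsing_inv _ (isUnit_iff_ne_zero.mpr hdet), one_mulVec]

theorem pos_of_one_sub_mulVec_eq_one (hB : ∀ i j, 0 ≤ B i j) (hrow : ∀ i, ∑ j, B i j < 1)
    {c : ι → ℝ} (hc : (1 - B) *ᵥ c = fun _ => 1) (i : ι) : 0 < c i := by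
  have : Nonempty ι := ⟨i⟩
  obtain ⟨m, hm⟩ := Finite.exists_min c
  have hfix : c m = 1 + ∑ j, B m j * c j := by
    have h := congrFun hc m
    rw [sub_mulVec, one_mulVec, Pi.sub_apply] at h
    simp only [mulVec, dotProduct] at h
    linarith
  have hmin : (∑ j, B m j) * c m ≤ ∑ j, B m j * c j := by
    rw [sum_mul]
    exact sum_le_sum fun j _ => mul_le_mul_of_nonneg_left (hm j) (hB m j)
  nlinarith [hrow m, hm i]

theorem inv_one_sub_mulVec_one_of_rowSum_eq {s : ℝ} (hrow : ∀ i, ∑ j, B i j = s) (hs : s ≠ 1)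
    (hdet : (1 - B).det ≠ 0) : (1 - B)⁻¹ *ᵥ (fun _ => 1) = fun _ => (1 - s)⁻¹ := by
  have hconst : (1 - B) *ᵥ (fun _ => (1 - s)⁻¹) = fun _ => 1 := by
    funext i
    rw [sub_mulVec, one_mulVec, Pi.sub_apply]
    simp only [mulVec, dotProduct, ← sum_mul, hrow i]
    field_simp [sub_ne_zero.mpr hs.symm]
  rw [← hconst, mulVec_mulVec, nonsing_inv_mul _ (isUnit_iff_ne_zero.mpr hdet), one_mulVec]

theorem sum_sum_erase_apply_eq_card (G : Matrix ι ι ℝ) (hdiag : ∀ i, G i i = 0)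
    (hrow : ∀ i, ∑ j, G i j = 1) : ∑ i, ∑ j ∈ univ.erase i, G j i = Fintype.card ι := by
  rw [sum_congr rfl fun i _ => sum_erase univ (f := fun j => G j i) (hdiag i), sum_comm]
  simp [hrow]

end Matrix

section Welfare

variable {ι : Type*} [Fintype ι]

theorem one_sub_mul_add_two_mul_pos {c d : ℝ} (hc : 0 < c) (hd : d ∈ Set.Icc (0 : ℝ) 1) :
    0 < (1 - d) * c + 2 * d := by
  rcases le_total c 2 with h | h
  · nlinarith [mul_nonneg hd.1 (sub_nonneg.mpr h)]
  · nlinarith [mul_nonneg (sub_nonneg.mpr hd.2) (sub_nonneg.mpr h)]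

theorem sum_welfare_pos_of_pos_of_mem_Icc [Nonempty ι] {c d : ι → ℝ} (hc : ∀ i, 0 < c i)
    (hd : ∀ i, d i ∈ Set.Icc (0 : ℝ) 1) : 0 < ∑ i, c i * ((1 - d i) * c i + 2 * d i) :=
  sum_pos (fun i _ => mul_pos (hc i) (one_sub_mul_add_two_mul_pos (hc i) (hd i))) univ_nonempty

theorem sum_welfare_const_pos [Nonempty ι] {k r : ℝ} {d : ι → ℝ} (hk : 0 < k)
    (hr : r ∈ Set.Icc (0 : ℝ) 1) (hd : ∑ i, d i = r * Fintype.card ι) :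
    0 < ∑ i, k * ((1 - d i) * k + 2 * d i) := by
  have hsum : ∑ i, k * ((1 - d i) * k + 2 * d i)
      = Fintype.card ι * (k * ((1 - r) * k + 2 * r)) := by
    simp only [mul_add, sub_mul, one_mul, sum_add_distrib, sum_sub_distrib, ← mul_sum, ← sum_mul,
      hd, sum_const, card_univ, nsmul_eq_mul]
    ring
  have := one_sub_mul_add_two_mul_pos hk hr
  rw [hsum]
  positivity

end Welfare

theorem welfare_pos_of_rowStochastic {ι : Type*} [Fintype ι] [DecidableEq ι] [Nonempty ι]
    {γ r : ℝ} (hγ : γ ∈ Set.Ioo (0 : ℝ) 1) (hr : r ∈ Set.Ioo (0 : ℝ) 1) {G : Matrix ι ι ℝ}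
    (hG : ∀ i j, 0 ≤ G i j) (hdiag : ∀ i, G i i = 0) (hrow : ∀ i, ∑ j, G i j = 1)
    {d : ι → ℝ} (hd : ∀ i, d i = r * ∑ j ∈ univ.erase i, G j i) :
    0 < ∑ i, ((1 - γ • r • G)⁻¹ *ᵥ (fun _ => 1)) i *
      ((1 - d i) * ((1 - γ • r • G)⁻¹ *ᵥ (fun _ => 1)) i + 2 * d i) := by
  have hγr : γ * r < 1 := by nlinarith [hγ.1, hγ.2, hr.1, hr.2]
  have hB : ∀ i j, 0 ≤ (γ • r • G) i j := fun i j => by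
    simpa [Matrix.smul_apply] using mul_nonneg hγ.1.le (mul_nonneg hr.1.le (hG i j))
  have hBrow : ∀ i, ∑ j, (γ • r • G) i j = γ * r := fun i => by
    simp [Matrix.smul_apply, ← mul_sum, hrow i]
  rw [inv_one_sub_mulVec_one_of_rowSum_eq hBrow hγr.ne
    (det_one_sub_ne_zero_of_nonneg_of_rowSum_lt_one hB fun i => (hBrow i).trans_lt hγr)]
  refine sum_welfare_const_pos (inv_pos.mpr (sub_pos.mpr hγr)) ⟨hr.1.le, hr.2.le⟩ ?_
  simp only [hd, ← mul_sum, sum_sum_erase_apply_eq_card G hdiag hrow]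

theorem welfare_pos_of_uniform {n : ℕ} (hn : 2 ≤ n) {γ : ℝ} (hγ : γ ∈ Set.Ioo (0 : ℝ) 1)
    {r : Fin n → ℝ} (hr : ∀ i, r i ∈ Set.Ioo (0 : ℝ) 1) {Gt : Matrix (Fin n) (Fin n) ℝ}
    (hdiag : ∀ i, Gt i i = 0) (hoff : ∀ i j, i ≠ j → Gt i j = r i / (n - 1)) {d : Fin n → ℝ}
    (hd : ∀ i, d i = (∑ j ∈ univ.erase i, r j) / (n - 1)) :
    0 < ∑ i, ((1 - γ • Gt)⁻¹ *ᵥ (fun _ => 1)) i *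
      ((1 - d i) * ((1 - γ • Gt)⁻¹ *ᵥ (fun _ => 1)) i + 2 * d i) := by
  have : Nonempty (Fin n) := ⟨⟨0, by omega⟩⟩
  have hm : (0 : ℝ) < n - 1 := by
    have : (2 : ℝ) ≤ n := by exact_mod_cast hn
    linarith
  have hcard : ∀ i : Fin n, ((univ.erase i).card : ℝ) = n - 1 := fun i => by
    rw [cast_card_erase_of_mem (mem_univ i), card_univ, Fintype.card_fin]
  have hGt : ∀ i j, 0 ≤ Gt i j := fun i j => by
    rcases eq_or_ne i j with rfl | hij
    · exact (hdiag i).ge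
    · rw [hoff i j hij]; exact div_nonneg (hr i).1.le hm.le
  have hGtrow : ∀ i, ∑ j, Gt i j = r i := fun i => by
    rw [← add_sum_erase _ _ (mem_univ i), hdiag i,
      sum_congr rfl fun j hj => hoff i j (ne_of_mem_erase hj).symm, sum_const, nsmul_eq_mul,
      hcard i]
    field_simp
    ring
  have hB : ∀ i j, 0 ≤ (γ • Gt) i j := fun i j => mul_nonneg hγ.1.le (hGt i j)
  have hBrow : ∀ i, ∑ j, (γ • Gt) i j < 1 := fun i => by
    simp only [Matrix.smul_apply, smul_eq_mul, ← mul_sum, hGtrow i]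
    nlinarith [hγ.1, hγ.2, (hr i).1, (hr i).2]
  refine sum_welfare_pos_of_pos_of_mem_Icc
    (pos_of_one_sub_mulVec_eq_one hB hBrow (mulVec_nonsing_inv_mulVec
      (det_one_sub_ne_zero_of_nonneg_of_rowSum_lt_one hB hBrow) _)) fun i => ?_
  have hsum : ∑ j ∈ univ.erase i, r j ≤ n - 1 := by
    calc ∑ j ∈ univ.erase i, r j ≤ ∑ _j ∈ univ.erase i, (1 : ℝ) :=
          sum_le_sum fun j _ => (hr j).2.le
      _ = n - 1 := by rw [sum_const, nsmul_one, hcard i]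
  rw [hd i]
  exact ⟨div_nonneg (sum_nonneg fun j _ => (hr j).1.le) hm.le, (div_le_one hm).mpr hsum⟩

/-- With homogeneous coordination intensity on a row-stochastic network
(case 1), or homogeneous interaction direction `g_ij = 1/(n-1)` with heterogeneous
intensities (case 2), the welfare expression `Σ_i c_i ((1 - d_i) c_i + 2 d_i)` is
strictly positive. -/
theorem stmt8 (n : ℕ) (hn : 2 ≤ n) (γ : ℝ) (hγ : γ ∈ Set.Ioo (0 : ℝ) 1) :
    (∀ (G : Matrix (Fin n) (Fin n) ℝ) (r : ℝ),
      (∀ i j, 0 ≤ G i j) → (∀ i, G i i = 0) → (∀ i, ∑ j, G i j = 1) →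
      r ∈ Set.Ioo (0 : ℝ) 1 →
      ∀ (Gt : Matrix (Fin n) (Fin n) ℝ), Gt = r • G →
      ∀ (c : Fin n → ℝ), c = (1 - γ • Gt)⁻¹ *ᵥ (fun _ => 1) →
      ∀ (d : Fin n → ℝ), (∀ i, d i = r * ∑ j ∈ Finset.univ.erase i, G j i) →
      0 < ∑ i, c i * ((1 - d i) * c i + 2 * d i)) ∧
    (∀ (r : Fin n → ℝ), (∀ i, r i ∈ Set.Ioo (0 : ℝ) 1) →
      ∀ (Gt : Matrix (Fin n) (Fin n) ℝ),
      (∀ i, Gt i i = 0) → (∀ i j, i ≠ j → Gt i j = r i / (n - 1)) →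
      ∀ (c : Fin n → ℝ), c = (1 - γ • Gt)⁻¹ *ᵥ (fun _ => 1) →
      ∀ (d : Fin n → ℝ), (∀ i, d i = (∑ j ∈ Finset.univ.erase i, r j) / (n - 1)) →
      0 < ∑ i, c i * ((1 - d i) * c i + 2 * d i)) := by
  refine ⟨?_, ?_⟩
  · rintro G r hG hdiag hrow hr Gt rfl c rfl d hd
    have : Nonempty (Fin n) := ⟨⟨0, by omega⟩⟩
    exact welfare_pos_of_rowStochastic hγ hr hG hdiag hrow hd
  · rintro r hr Gt hdiag hoff c rfl d hd
    exact welfare_pos_of_uniform hn hγ hr hdiag hoff hd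
end

section
/- Let n ≥ 1, γ ∈ (0,1), and d ∈ [0,1). Let G be an n×n real matrix with nonnegative entries, zero diagonal, and all row sums equal to d (a regular network). Then the Katz–Bonacich centrality vector c = (I − γ·G)⁻¹ 𝟙 satisfies c_i = 1/(1−γd) for every i, and Σ_{i=1}^{n} c_i·( (1 − d_i^in)·c_i + 2·d_i^in ) = n·(1 + d − 2γd²)/(1−γd)², which is strictly positive. Moreover, for fixed γ ∈ (0,1) the function d ↦ (1 + d − 2γd²)/(1−γd)² is strictly increasing on [0,1). -/
open Matrix Finset

/-- In a regular network with common out-degree `d`, every agent has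
Katz–Bonacich centrality `1/(1-γd)`, the welfare expression equals
`n (1 + d - 2γd²)/(1-γd)²` and is strictly positive, and for fixed `γ` the map
`d ↦ (1 + d - 2γd²)/(1-γd)²` is strictly increasing on `[0,1)`. -/
theorem stmt9 (n : ℕ) (hn : 1 ≤ n) (γ : ℝ) (hγ : γ ∈ Set.Ioo (0 : ℝ) 1)
    (d : ℝ) (hd : d ∈ Set.Ico (0 : ℝ) 1)
    (G : Matrix (Fin n) (Fin n) ℝ)
    (hpos : ∀ i j, 0 ≤ G i j) (hdiag : ∀ i, G i i = 0)
    (hrow : ∀ i, ∑ j, G i j = d)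
    (c : Fin n → ℝ) (hc : c = (1 - γ • G)⁻¹ *ᵥ fun _ => 1)
    (din : Fin n → ℝ) (hdin : ∀ i, din i = ∑ j ∈ Finset.univ.erase i, G j i) :
    (∀ i, c i = 1 / (1 - γ * d)) ∧
    (∑ i, c i * ((1 - din i) * c i + 2 * din i)
      = n * (1 + d - 2 * γ * d ^ 2) / (1 - γ * d) ^ 2) ∧
    (0 < n * (1 + d - 2 * γ * d ^ 2) / (1 - γ * d) ^ 2) ∧
    StrictMonoOn (fun t : ℝ => (1 + t - 2 * γ * t ^ 2) / (1 - γ * t) ^ 2)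
      (Set.Ico (0 : ℝ) 1) := by
  obtain ⟨hγ0, hγ1⟩ := hγ
  obtain ⟨hd0, hd1⟩ := hd
  have hγd : γ * d < 1 := by nlinarith
  have h1 : (0:ℝ) < 1 - γ * d := by linarith
  set M : Matrix (Fin n) (Fin n) ℝ := 1 - γ • G with hM
  have hMdiag : ∀ i, M i i = 1 := by
    intro i
    simp [hM, Matrix.sub_apply, Matrix.one_apply, hdiag i]
  have hMoff : ∀ i j, i ≠ j → M i j = -(γ * G i j) := by
    intro i j hij
    simp [hM, Matrix.sub_apply, Matrix.one_apply, hij]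
  have hdet : M.det ≠ 0 := by
    apply det_ne_zero_of_sum_row_lt_diag
    intro k
    have hsum : ∑ j ∈ Finset.univ.erase k, ‖M k j‖ = γ * d := by
      have : ∑ j ∈ Finset.univ.erase k, ‖M k j‖
          = ∑ j ∈ Finset.univ.erase k, γ * G k j := by
        apply Finset.sum_congr rfl
        intro j hj
        have hjk : k ≠ j := fun h => (Finset.mem_erase.mp hj).1 h.symm
        rw [hMoff k j hjk, norm_neg, Real.norm_of_nonneg
          (mul_nonneg hγ0.le (hpos k j))]
      rw [this, Finset.sum_erase_eq_sub (Finset.mem_univ k), hdiag k, ← Finset.mul_sum, hrow k]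
      ring
    rw [hsum, hMdiag k, norm_one]
    exact hγd
  -- M applied to the constant vector (1-γd)⁻¹ gives the ones vector
  have key : M *ᵥ (fun _ => 1 / (1 - γ * d)) = fun _ => (1:ℝ) := by
    funext i
    have : (M *ᵥ fun _ => 1 / (1 - γ * d)) i
        = (∑ j, M i j) * (1 / (1 - γ * d)) := by
      simp [Matrix.mulVec, dotProduct, Finset.sum_mul]
    rw [this]
    have hsum : ∑ j, M i j = 1 - γ * d := by
      have : ∑ j, M i j = ∑ j, ((1 : Matrix (Fin n) (Fin n) ℝ) i j - γ * G i j) := by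
        apply Finset.sum_congr rfl
        intro j _
        simp [hM, Matrix.sub_apply]
      rw [this, Finset.sum_sub_distrib, ← Finset.mul_sum, hrow i]
      congr 1
      simp [Matrix.one_apply]
    rw [hsum]
    field_simp
  have hcval : ∀ i, c i = 1 / (1 - γ * d) := by
    intro i
    have : c = fun _ => 1 / (1 - γ * d) := by
      rw [hc, ← key, Matrix.mulVec_mulVec, Matrix.nonsing_inv_mul M (isUnit_iff_ne_zero.mpr hdet),
        Matrix.one_mulVec]
    rw [this]
  refine ⟨hcval, ?_, ?_, ?_⟩
  · -- the sum
    have hdinsum : ∑ i, din i = n * d := by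
      have h1' : ∀ i, din i = ∑ j, G j i := by
        intro i
        rw [hdin i, Finset.sum_erase_eq_sub (Finset.mem_univ i), hdiag i, sub_zero]
      calc ∑ i, din i = ∑ i, ∑ j, G j i := by simp_rw [h1']
        _ = ∑ j, ∑ i, G j i := Finset.sum_comm
        _ = ∑ _j : Fin n, d := by simp_rw [hrow]
        _ = n * d := by simp [mul_comm]
    set k := 1 / (1 - γ * d) with hk
    have hexp : ∑ i, c i * ((1 - din i) * c i + 2 * din i)
        = n * k ^ 2 + (∑ i, din i) * (2 * k - k ^ 2) := by
      have : ∀ i, c i * ((1 - din i) * c i + 2 * din i)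
          = k ^ 2 + din i * (2 * k - k ^ 2) := by
        intro i; rw [hcval i]; ring
      simp_rw [this, Finset.sum_add_distrib, ← Finset.sum_mul]
      simp [mul_comm]
    rw [hexp, hdinsum, hk]
    have h1ne : (1 - γ * d) ≠ 0 := ne_of_gt h1
    field_simp
    ring
  · -- positivity
    have hnum : 0 < 1 + d - 2 * γ * d ^ 2 := by nlinarith
    have hn' : (0:ℝ) < n := by exact_mod_cast hn
    positivity
  · -- strict monotonicity
    intro a ha b hb hab
    obtain ⟨ha0, ha1⟩ := ha
    obtain ⟨hb0, hb1⟩ := hb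
    have hga : γ * a < 1 := by nlinarith [mul_lt_mul_of_pos_left ha1 hγ0]
    have hgb : γ * b < 1 := by nlinarith [mul_lt_mul_of_pos_left hb1 hγ0]
    have hda : (0:ℝ) < (1 - γ * a) ^ 2 := by nlinarith
    have hdb : (0:ℝ) < (1 - γ * b) ^ 2 := by nlinarith
    simp only
    rw [div_lt_div_iff₀ hda hdb]
    have hbr : 0 < 1 + 2*γ - (2*γ + γ^2)*(a+b) + 3*γ^2*(a*b) := by
      nlinarith [mul_nonneg (mul_nonneg hγ0.le hγ0.le)
          (mul_nonneg (sub_nonneg.mpr ha1.le) (sub_nonneg.mpr hb1.le)),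
        sq_nonneg (1 - γ),
        mul_pos (mul_pos hγ0 (sub_pos.mpr hγ1)) (by linarith : (0:ℝ) < 2 - (a+b))]
    nlinarith [mul_pos (sub_pos.mpr hab) hbr]
end

section
/- Let γ ∈ (0,1) and α, β ∈ [0,1) with γβ < 1, and let G be the 3×3 matrix (agents A, B, C) with G A B = α, G B C = G C B = β and all other entries zero. Then the Katz–Bonacich centrality vector c = (I − γ·G)⁻¹ 𝟙 satisfies c_A = (1 + γ(α−β))/(1−γβ) and c_B = c_C = 1/(1−γβ), and moreover c_A² − α·c_B·(c_B − 2) = f(α,β,γ)/(1−γβ)², where f(α,β,γ) = (1 + γ(α−β))² − α(2γβ − 1). -/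
open Matrix Finset

/-- In the three-agent network where Ann follows Bob with weight `α`
and Bob and Carol follow each other with weight `β`, the Katz–Bonacich centralities
are `c_A = (1+γ(α-β))/(1-γβ)` and `c_B = c_C = 1/(1-γβ)`, and
`c_A² - α c_B (c_B - 2) = f(α,β,γ)/(1-γβ)²` where
`f(α,β,γ) = (1+γ(α-β))² - α(2γβ-1)`. -/
theorem stmt10 (γ α β : ℝ) (hγ : γ ∈ Set.Ioo (0 : ℝ) 1)
    (hα : α ∈ Set.Ico (0 : ℝ) 1) (hβ : β ∈ Set.Ico (0 : ℝ) 1)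
    (hγβ : γ * β < 1)
    (G : Matrix (Fin 3) (Fin 3) ℝ)
    (hG : G = Matrix.of ![![0, α, 0], ![0, 0, β], ![0, β, 0]])
    (c : Fin 3 → ℝ) (hc : c = (1 - γ • G)⁻¹ *ᵥ fun _ => 1) :
    c 0 = (1 + γ * (α - β)) / (1 - γ * β) ∧
    c 1 = 1 / (1 - γ * β) ∧
    c 2 = 1 / (1 - γ * β) ∧
    (c 0) ^ 2 - α * (c 1 * (c 1 - 2))
      = ((1 + γ * (α - β)) ^ 2 - α * (2 * γ * β - 1)) / (1 - γ * β) ^ 2 := by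
  obtain ⟨hγ0, hγ1⟩ := hγ
  obtain ⟨hα0, hα1⟩ := hα
  obtain ⟨hβ0, hβ1⟩ := hβ
  have hne : (1 : ℝ) - γ * β ≠ 0 := by nlinarith
  set A : Matrix (Fin 3) (Fin 3) ℝ := 1 - γ • G with hA
  have hAe : A = !![1, -(γ*α), 0; 0, 1, -(γ*β); 0, -(γ*β), 1] := by
    subst hG
    ext i j
    fin_cases i <;> fin_cases j <;>
      simp [hA, Matrix.one_apply, Matrix.vecHead, Matrix.vecTail]
  have hdet : A.det = 1 - γ * β * (γ * β) := by
    rw [hAe, Matrix.det_fin_three]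
    simp [Matrix.vecHead, Matrix.vecTail]
  have hdet0 : A.det ≠ 0 := by rw [hdet]; nlinarith [mul_nonneg hγ0.le hβ0, mul_pos hγ0 hγ0]
  set v : Fin 3 → ℝ := ![(1 + γ * (α - β)) / (1 - γ * β), 1 / (1 - γ * β),
      1 / (1 - γ * β)] with hv
  have hAv : A *ᵥ v = fun _ => 1 := by
    funext i
    fin_cases i <;>
      simp [hAe, hv, Matrix.mulVec, dotProduct, Fin.sum_univ_three, Matrix.vecHead, Matrix.vecTail] <;>
      field_simp <;> ring
  have hcv : c = v := by
    rw [hc, hA, ← hAv, Matrix.mulVec_mulVec, Matrix.nonsing_inv_mul _ (isUnit_iff_ne_zero.mpr hdet0), Matrix.one_mulVec]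
  subst hcv
  refine ⟨rfl, rfl, rfl, ?_⟩
  show ((1 + γ * (α - β)) / (1 - γ * β)) ^ 2 -
      α * (1 / (1 - γ * β) * (1 / (1 - γ * β) - 2)) = _
  field_simp
  ring
end

section
/- Let γ ∈ (0,1) and define f(α,β,γ) = (1 + γ(α−β))² − α(2γβ − 1). Then there exist α, β ∈ [0,1) with f(α,β,γ) < 0 if and only if γ > (1+√5)/4. -/
/-- For `γ ∈ (0,1)`, there exist `α, β ∈ [0,1)` with
`f(α,β,γ) = (1+γ(α-β))² - α(2γβ-1) < 0` if and only if `γ > (1+√5)/4`. -/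
theorem stmt11 (γ : ℝ) (hγ : γ ∈ Set.Ioo (0 : ℝ) 1) :
    (∃ α β : ℝ, α ∈ Set.Ico (0 : ℝ) 1 ∧ β ∈ Set.Ico (0 : ℝ) 1 ∧
      (1 + γ * (α - β)) ^ 2 - α * (2 * γ * β - 1) < 0) ↔
    (1 + Real.sqrt 5) / 4 < γ := by
  obtain ⟨hγ0, hγ1⟩ := hγ
  have h5 : Real.sqrt 5 ^ 2 = 5 := Real.sq_sqrt (by norm_num)
  have h5pos : (0:ℝ) < Real.sqrt 5 := Real.sqrt_pos.mpr (by norm_num)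
  -- key equivalence: γ > (1+√5)/4 ↔ 4γ² > 2γ+1
  have hkey : (1 + Real.sqrt 5) / 4 < γ ↔ 2*γ + 1 < 4*γ^2 := by
    constructor
    · intro h
      nlinarith [sq_nonneg (4*γ - 1 - Real.sqrt 5)]
    · intro h
      by_contra hle
      push_neg at hle
      have h1 : 0 ≤ (1 + Real.sqrt 5) / 4 - γ := by linarith
      have h2 : 0 ≤ γ - (1 - Real.sqrt 5) / 4 := by nlinarith
      nlinarith [mul_nonneg h1 h2]
  rw [hkey]
  constructor
  · rintro ⟨α, β, ⟨hα0, hα1⟩, ⟨hβ0, hβ1⟩, hf⟩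
    by_contra h
    push_neg at h
    -- b is the linear coefficient of α in f
    set b : ℝ := 2*γ - 2*γ^2*β - 2*γ*β + 1 with hb
    rcases le_or_gt 0 b with hbpos | hbneg
    · -- f = γ²α² + bα + (1-γβ)² ≥ 0
      nlinarith [mul_nonneg hbpos hα0, sq_nonneg (γ*β - 1), sq_nonneg (γ*α)]
    · -- b < 0 ⇒ 2γβ > 1 and second factor ≥ 0, so discriminant-type term ≥ 0
      have h2γβ : 1 < 2*γ*β := by nlinarith [mul_nonneg hγ0.le (sub_nonneg.mpr hβ1.le)]
      have hfac : 0 ≤ 4*γ + 1 - 4*γ^2*β - 2*γ*β := by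
        nlinarith [mul_nonneg hγ0.le (sub_nonneg.mpr hβ1.le),
          mul_nonneg (mul_pos hγ0 hγ0).le (sub_nonneg.mpr hβ1.le)]
      have hid : 4*γ^2*((1 + γ*(α - β))^2 - α*(2*γ*β - 1)) =
          (2*γ^2*α + b)^2 + (2*γ*β - 1)*(4*γ + 1 - 4*γ^2*β - 2*γ*β) := by
        rw [hb]; ring
      nlinarith [sq_nonneg (2*γ^2*α + b), mul_nonneg (by linarith : (0:ℝ) ≤ 2*γ*β - 1) hfac,
        mul_pos (mul_pos hγ0 hγ0) (neg_pos.mpr hf)]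
  · intro h
    have hg2 : 1 < 2*γ^2 := by nlinarith
    have hγhalf : 1/2 < γ := by nlinarith
    set α : ℝ := (2*γ^2 - 1)/(2*γ^2) with hα
    have h2γ2 : (0:ℝ) < 2*γ^2 := by positivity
    have hα0 : 0 ≤ α := div_nonneg (by linarith) h2γ2.le
    have hα1 : α < 1 := by
      rw [div_lt_one h2γ2]; linarith
    set g : ℝ → ℝ := fun β => (1 + γ * (α - β)) ^ 2 - α * (2 * γ * β - 1) with hg
    have hg1 : g 1 = (2*γ-1)*(2*γ+1-4*γ^2)/(4*γ^2) := by
      simp only [hg, hα]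
      field_simp
      ring
    have hg1neg : g 1 < 0 := by
      rw [hg1]
      apply div_neg_of_neg_of_pos _ (by positivity)
      nlinarith
    have hcont : Continuous g := by fun_prop
    have hopen : IsOpen (g ⁻¹' Set.Iio 0) := (isOpen_Iio).preimage hcont
    have hmem : (1:ℝ) ∈ g ⁻¹' Set.Iio 0 := hg1neg
    have hclos : (1:ℝ) ∈ closure (Set.Ico (0:ℝ) 1) := by
      rw [closure_Ico (by norm_num : (0:ℝ) ≠ 1)]
      exact ⟨by norm_num, le_refl 1⟩
    obtain ⟨β, hβS, hβI⟩ := mem_closure_iff.mp hclos _ hopen hmem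
    exact ⟨α, β, ⟨hα0, hα1⟩, hβI, hβS⟩
end

section
/- Define f(α,β,γ) = (1 + γ(α−β))² − α(2γβ − 1). Let α, β ∈ [0,1) and 0 < γ ≤ γ' < 1. If f(α,β,γ) < 0, then α < β, the partial derivative of f with respect to γ is strictly negative at every γ'' ∈ (0,1) (given α < β), and f(α,β,γ') < 0. -/
/-!
If `β ≤ α` then `f = (1 + γ(α - β))² + α(1 - 2γβ)` is positive: for `0 ≤ γ < 1` the square is
at least `1` while the second term exceeds `-α > -1`, and for `γ < 0` both terms are nonnegative.
Hence `f(α, β, γ) < 0` forces `α < β`. Then `∂f/∂γ = 2(α - β)(1 + γ(α - β)) - 2αβ` is negative for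
`γ < 1`, because `1 + γ(α - β) > 0` there, so `f` is strictly decreasing on `(-∞, 1)` and
stays negative as `γ` grows.
-/

def harmIndex (α β γ : ℝ) : ℝ :=
  (1 + γ * (α - β)) ^ 2 - α * (2 * γ * β - 1)

namespace harmIndex

theorem hasDerivAt (α β γ : ℝ) :
    HasDerivAt (harmIndex α β) (2 * (α - β) * (1 + γ * (α - β)) - 2 * α * β) γ := by
  have h := (((hasDerivAt_id' γ).mul_const (α - β)).const_add 1).fun_pow 2
  have h' := (((hasDerivAt_id' γ).const_mul 2).mul_const β).sub_const 1 |>.const_mul α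
  exact (h.fun_sub h').congr_deriv (by push_cast; ring)

theorem continuous (α β : ℝ) : Continuous (harmIndex α β) := by
  unfold harmIndex; fun_prop

theorem pos_of_le {α β γ : ℝ} (hα₀ : 0 ≤ α) (hα₁ : α < 1) (hβ : 0 ≤ β) (hβα : β ≤ α)
    (hγ : γ < 1) : 0 < harmIndex α β γ := by
  unfold harmIndex
  rcases le_or_gt 0 γ with hγ₀ | hγ₀
  · nlinarith [mul_nonneg hγ₀ (sub_nonneg.2 hβα), mul_nonneg hα₀ (sub_nonneg.2 hβα),
      mul_nonneg hα₀ (mul_nonneg (sub_nonneg.2 hγ.le) hβ)]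
  · rcases hα₀.eq_or_lt with rfl | hα₀
    · norm_num [le_antisymm hβα hβ]
    · nlinarith [sq_nonneg (1 + γ * (α - β)),
        mul_nonneg hα₀.le (mul_nonneg (neg_nonneg.2 hγ₀.le) hβ)]

theorem deriv_neg {α β γ : ℝ} (hα : 0 ≤ α) (hαβ : α < β) (hβ : β ≤ 1) (hγ : γ < 1) :
    deriv (harmIndex α β) γ < 0 := by
  rw [(hasDerivAt α β γ).deriv]
  have hpos : 0 < 1 + γ * (α - β) := by
    rcases le_or_gt γ 0 with hγ₀ | hγ₀ <;> nlinarith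
  nlinarith [mul_pos hpos (sub_pos.2 hαβ), mul_nonneg hα (hα.trans hαβ.le)]

theorem strictAntiOn {α β : ℝ} (hα : 0 ≤ α) (hαβ : α < β) (hβ : β ≤ 1) :
    StrictAntiOn (harmIndex α β) (Set.Iio 1) :=
  strictAntiOn_of_deriv_neg (convex_Iio 1) (continuous α β).continuousOn fun _ hγ =>
    deriv_neg hα hαβ hβ (interior_Iio.subset hγ)

end harmIndex

theorem stmt12_general (α β γ γ' : ℝ)
    (hα : α ∈ Set.Ico (0 : ℝ) 1) (hβ : β ∈ Set.Ico (0 : ℝ) 1)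
    (hγγ' : γ ≤ γ') (hγ' : γ' < 1)
    (hf : (1 + γ * (α - β)) ^ 2 - α * (2 * γ * β - 1) < 0) :
    α < β ∧
    (α < β → ∀ γ'' ∈ Set.Ioo (0 : ℝ) 1,
      deriv (fun g : ℝ => (1 + g * (α - β)) ^ 2 - α * (2 * g * β - 1)) γ'' < 0) ∧
    (1 + γ' * (α - β)) ^ 2 - α * (2 * γ' * β - 1) < 0 := by
  obtain ⟨hα₀, hα₁⟩ := hα
  obtain ⟨hβ₀, hβ₁⟩ := hβ
  have hγ : γ < 1 := hγγ'.trans_lt hγ'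
  have hαβ : α < β := by
    by_contra! hβα
    exact (harmIndex.pos_of_le hα₀ hα₁ hβ₀ hβα hγ).not_gt hf
  refine ⟨hαβ, fun _ γ'' hγ'' => harmIndex.deriv_neg hα₀ hαβ hβ₁.le hγ''.2, ?_⟩
  calc harmIndex α β γ' ≤ harmIndex α β γ :=
        (harmIndex.strictAntiOn hα₀ hαβ hβ₁.le).antitoneOn hγ hγ' hγγ'
    _ < 0 := hf

/-- If `f(α,β,γ) = (1+γ(α-β))² - α(2γβ-1) < 0` for some `γ ∈ (0,1)`,
then `α < β`, the derivative of `f` in `γ` is strictly negative on `(0,1)` (given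
`α < β`), and `f(α,β,γ') < 0` for every `γ' ∈ [γ, 1)`; i.e. the set `𝒢(γ)` is
monotonically increasing in `γ`. -/
theorem stmt12 (α β γ γ' : ℝ)
    (hα : α ∈ Set.Ico (0 : ℝ) 1) (hβ : β ∈ Set.Ico (0 : ℝ) 1)
    (hγ : 0 < γ) (hγγ' : γ ≤ γ') (hγ' : γ' < 1)
    (hf : (1 + γ * (α - β)) ^ 2 - α * (2 * γ * β - 1) < 0) :
    α < β ∧
    (α < β → ∀ γ'' ∈ Set.Ioo (0 : ℝ) 1,
      deriv (fun g : ℝ => (1 + g * (α - β)) ^ 2 - α * (2 * g * β - 1)) γ'' < 0) ∧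
    (1 + γ' * (α - β)) ^ 2 - α * (2 * γ' * β - 1) < 0 :=
  stmt12_general α β γ γ' hα hβ hγγ' hγ' hf
end

section
/- Let γ ∈ (0,1), α, β ∈ [0,1), and let the index set {1,…,n} be partitioned into a core C with |C| = l ≥ 1 and a periphery P with |P| = m ≥ 1. Let G be an n×n real matrix with nonnegative entries and zero diagonal such that G i j = 0 whenever j ∈ P, Σ_{j∈C} G i j = β for every i ∈ C, and Σ_{j∈C} G i j = α for every i ∈ P. Then the Katz–Bonacich centrality vector c = (I − γ·G)⁻¹ 𝟙 satisfies c_i = 1/(1−γβ) for i ∈ C and c_i = (1 + γ(α−β))/(1−γβ) for i ∈ P, and Σ_{i=1}^{n} c_i·( (1 − d_i^in)·c_i + 2·d_i^in ) = ( m·f(α,β,γ) + l·(1 − β(2γβ − 1)) ) / (1−γβ)², where d_i^in = Σ_{j≠i} G j i and f(α,β,γ) = (1 + γ(α−β))² − α(2γβ − 1). -/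
open Matrix Finset

/-!
Since every agent links only to the core, with row sums `β` on the core, the vector that is
`a` on the core and `b` on the periphery is mapped by `1 - γ • G` to the vector that is
`a - γβa` on the core and `b - γαa` on the periphery; solving `a - γβa = 1 = b - γαa` gives the
centralities. The matrix `1 - γ • G` is invertible because `γ` times every row sum of `G` is below
`1`, which makes it strictly diagonally dominant. In the welfare sum peripheral agents have
in-degree `0`, and the in-degrees of the core add up to the total number of links `lβ + mα`.
-/

theorem Matrix.isUnit_det_one_sub_smul_of_rowSum_lt {ι : Type*} [Fintype ι] [DecidableEq ι]
    {G : Matrix ι ι ℝ} {γ : ℝ} (hγ : 0 ≤ γ) (hG : ∀ i j, 0 ≤ G i j)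
    (hrow : ∀ i, γ * ∑ j, G i j < 1) : IsUnit (1 - γ • G).det := by
  refine isUnit_iff_ne_zero.mpr (det_ne_zero_of_sum_row_lt_diag fun k => ?_)
  have hoff : ∀ j ∈ univ.erase k, ‖(1 - γ • G) k j‖ = γ * G k j := fun j hj => by
    rw [sub_apply, one_apply_ne' (ne_of_mem_erase hj), smul_apply, smul_eq_mul, zero_sub,
      norm_neg, Real.norm_of_nonneg (mul_nonneg hγ (hG k j))]
  calc ∑ j ∈ univ.erase k, ‖(1 - γ • G) k j‖ = γ * ∑ j, G k j - γ * G k k := by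
        rw [sum_congr rfl hoff, ← mul_sum, ← sum_erase_add _ _ (mem_univ k)]; ring
    _ < 1 - γ * G k k := by linarith [hrow k]
    _ = (1 - γ • G) k k := by simp
    _ ≤ ‖(1 - γ • G) k k‖ := Real.le_norm_self _

theorem Matrix.inv_mulVec_eq_of_mulVec_eq {ι : Type*} [Fintype ι] [DecidableEq ι]
    {A : Matrix ι ι ℝ} (hA : IsUnit A.det) {u v : ι → ℝ} (h : A *ᵥ v = u) : A⁻¹ *ᵥ u = v := by
  rw [← h, mulVec_mulVec, nonsing_inv_mul A hA, one_mulVec]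

section CorePeriphery

variable {ι : Type*} [Fintype ι] {C : Finset ι} {G : Matrix ι ι ℝ} {α β : ℝ}

theorem mulVec_apply_eq_sum_core (hG : ∀ i, ∀ j ∉ C, G i j = 0) (w : ι → ℝ) (i : ι) :
    (G *ᵥ w) i = ∑ j ∈ C, G i j * w j :=
  (sum_subset (subset_univ C) fun j _ hj => by simp [hG i j hj]).symm

variable [DecidableEq ι]

theorem one_sub_smul_mulVec_piecewise (hG : ∀ i, ∀ j ∉ C, G i j = 0)
    (hcore : ∀ i ∈ C, ∑ j ∈ C, G i j = β) (hperi : ∀ i ∉ C, ∑ j ∈ C, G i j = α) (γ a b : ℝ) :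
    (1 - γ • G) *ᵥ C.piecewise (fun _ => a) (fun _ => b)
      = C.piecewise (fun _ => a - γ * β * a) (fun _ => b - γ * α * a) := by
  funext i
  have hGw : (G *ᵥ C.piecewise (fun _ => a) (fun _ => b)) i = (∑ j ∈ C, G i j) * a := by
    rw [mulVec_apply_eq_sum_core hG, sum_mul]
    exact sum_congr rfl fun j hj => by rw [piecewise_eq_of_mem _ _ _ hj]
  rw [sub_mulVec, one_mulVec, smul_mulVec, Pi.sub_apply, Pi.smul_apply, hGw, smul_eq_mul]
  by_cases hi : i ∈ C
  · simp only [piecewise_eq_of_mem _ _ _ hi, hcore i hi]; ring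
  · simp only [piecewise_eq_of_notMem _ _ _ hi, hperi i hi]; ring

theorem katzBonacich_eq_piecewise {γ : ℝ} (hγ : 0 ≤ γ) (hGnonneg : ∀ i j, 0 ≤ G i j)
    (hG : ∀ i, ∀ j ∉ C, G i j = 0)
    (hcore : ∀ i ∈ C, ∑ j ∈ C, G i j = β) (hperi : ∀ i ∉ C, ∑ j ∈ C, G i j = α)
    (hγβ : γ * β < 1) (hγα : γ * α < 1) :
    (1 - γ • G)⁻¹ *ᵥ (fun _ => 1)
      = C.piecewise (fun _ => 1 / (1 - γ * β)) (fun _ => (1 + γ * (α - β)) / (1 - γ * β)) := by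
  have hrow : ∀ i, γ * ∑ j, G i j < 1 := fun i => by
    have hsum : ∑ j, G i j = ∑ j ∈ C, G i j :=
      (sum_subset (subset_univ C) fun j _ hj => hG i j hj).symm
    by_cases hi : i ∈ C
    · rwa [hsum, hcore i hi]
    · rwa [hsum, hperi i hi]
  refine inv_mulVec_eq_of_mulVec_eq (isUnit_det_one_sub_smul_of_rowSum_lt hγ hGnonneg hrow) ?_
  have hden : 1 - γ * β ≠ 0 := by linarith
  rw [one_sub_smul_mulVec_piecewise hG hcore hperi, ← piecewise_same C fun _ => (1 : ℝ)]
  congr 2 <;> funext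
  · field_simp
  · field_simp; ring

theorem sum_core_colSum (hcore : ∀ i ∈ C, ∑ j ∈ C, G i j = β)
    (hperi : ∀ i ∉ C, ∑ j ∈ C, G i j = α) :
    ∑ i ∈ C, ∑ j, G j i = #C * β + #Cᶜ * α := by
  rw [sum_comm, ← sum_add_sum_compl C, sum_congr rfl hcore,
    sum_congr rfl fun i hi => hperi i (mem_compl.mp hi), sum_const, sum_const,
    nsmul_eq_mul, nsmul_eq_mul]

theorem sum_welfare_of_core_periphery {c d : ι → ℝ} {a b : ℝ} (hcC : ∀ i ∈ C, c i = a)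
    (hcP : ∀ i ∉ C, c i = b) (hd : ∀ i ∉ C, d i = 0) :
    ∑ i, c i * ((1 - d i) * c i + 2 * d i)
      = #C * a ^ 2 + (2 * a - a ^ 2) * ∑ i ∈ C, d i + #Cᶜ * b ^ 2 := by
  have hcore_terms : ∀ i ∈ C, c i * ((1 - d i) * c i + 2 * d i) = a ^ 2 + (2 * a - a ^ 2) * d i :=
    fun i hi => by rw [hcC i hi]; ring
  have hperi_terms : ∀ i ∈ Cᶜ, c i * ((1 - d i) * c i + 2 * d i) = b ^ 2 := fun i hi => by
    rw [hcP i (mem_compl.mp hi), hd i (mem_compl.mp hi)]; ring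
  rw [← sum_add_sum_compl C, sum_congr rfl hcore_terms, sum_congr rfl hperi_terms,
    sum_add_distrib, ← mul_sum, sum_const, sum_const, nsmul_eq_mul, nsmul_eq_mul]

end CorePeriphery

theorem stmt13_general (n l m : ℕ)
    (γ α β : ℝ) (hγ : γ ∈ Set.Ioo (0 : ℝ) 1)
    (hα : α ∈ Set.Ico (0 : ℝ) 1) (hβ : β ∈ Set.Ico (0 : ℝ) 1)
    (C P : Finset (Fin n)) (hdisj : Disjoint C P) (hunion : C ∪ P = Finset.univ)
    (hcardC : C.card = l) (hcardP : P.card = m)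
    (G : Matrix (Fin n) (Fin n) ℝ)
    (hpos : ∀ i j, 0 ≤ G i j) (hdiag : ∀ i, G i i = 0)
    (hP : ∀ i j, j ∈ P → G i j = 0)
    (hcore : ∀ i ∈ C, ∑ j ∈ C, G i j = β)
    (hperi : ∀ i ∈ P, ∑ j ∈ C, G i j = α)
    (c : Fin n → ℝ) (hc : c = (1 - γ • G)⁻¹ *ᵥ fun _ => 1)
    (din : Fin n → ℝ) (hdin : ∀ i, din i = ∑ j ∈ Finset.univ.erase i, G j i) :
    (∀ i ∈ C, c i = 1 / (1 - γ * β)) ∧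
    (∀ i ∈ P, c i = (1 + γ * (α - β)) / (1 - γ * β)) ∧
    (∑ i, c i * ((1 - din i) * c i + 2 * din i)
      = (m * ((1 + γ * (α - β)) ^ 2 - α * (2 * γ * β - 1))
          + l * (1 - β * (2 * γ * β - 1))) / (1 - γ * β) ^ 2) := by
  obtain ⟨hγ0, hγ1⟩ := hγ
  obtain ⟨-, hα1⟩ := hα
  obtain ⟨-, hβ1⟩ := hβ
  obtain rfl : P = Cᶜ := (isCompl_iff.mpr ⟨hdisj, codisjoint_iff.mpr hunion⟩).compl_eq.symm
  have hG : ∀ i, ∀ j ∉ C, G i j = 0 := fun i j hj => hP i j (mem_compl.mpr hj)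
  have hperi' : ∀ i ∉ C, ∑ j ∈ C, G i j = α := fun i hi => hperi i (mem_compl.mpr hi)
  have hγβ : γ * β < 1 := by nlinarith
  have hkb := katzBonacich_eq_piecewise hγ0.le hpos hG hcore hperi' hγβ (by nlinarith)
  have hcC : ∀ i ∈ C, c i = 1 / (1 - γ * β) := fun i hi => by
    rw [hc, hkb, piecewise_eq_of_mem _ _ _ hi]
  have hcP : ∀ i ∉ C, c i = (1 + γ * (α - β)) / (1 - γ * β) := fun i hi => by
    rw [hc, hkb, piecewise_eq_of_notMem _ _ _ hi]
  have hdin' : ∀ i, din i = ∑ j, G j i := fun i => (hdin i).trans (sum_erase _ (hdiag i))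
  refine ⟨hcC, fun i hi => hcP i (mem_compl.mp hi), ?_⟩
  rw [sum_welfare_of_core_periphery hcC hcP fun i hi => by
      rw [hdin', sum_eq_zero fun j _ => hG j i hi],
    sum_congr rfl fun i _ => hdin' i, sum_core_colSum hcore hperi', hcardC, hcardP]
  have hden : 1 - γ * β ≠ 0 := by linarith
  field_simp
  ring

/-- In a directed core-periphery network (core `C` of size `l`,
periphery `P` of size `m`, all out-links pointing to the core, core out-degree `β`
and peripheral out-degree `α`), the Katz–Bonacich centralities are `1/(1-γβ)` on the
core and `(1+γ(α-β))/(1-γβ)` on the periphery, and the welfare expression equals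
`(m·f(α,β,γ) + l·(1 - β(2γβ-1)))/(1-γβ)²`. -/
theorem stmt13 (n l m : ℕ) (hl : 1 ≤ l) (hm : 1 ≤ m)
    (γ α β : ℝ) (hγ : γ ∈ Set.Ioo (0 : ℝ) 1)
    (hα : α ∈ Set.Ico (0 : ℝ) 1) (hβ : β ∈ Set.Ico (0 : ℝ) 1)
    (C P : Finset (Fin n)) (hdisj : Disjoint C P) (hunion : C ∪ P = Finset.univ)
    (hcardC : C.card = l) (hcardP : P.card = m)
    (G : Matrix (Fin n) (Fin n) ℝ)
    (hpos : ∀ i j, 0 ≤ G i j) (hdiag : ∀ i, G i i = 0)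
    (hP : ∀ i j, j ∈ P → G i j = 0)
    (hcore : ∀ i ∈ C, ∑ j ∈ C, G i j = β)
    (hperi : ∀ i ∈ P, ∑ j ∈ C, G i j = α)
    (c : Fin n → ℝ) (hc : c = (1 - γ • G)⁻¹ *ᵥ fun _ => 1)
    (din : Fin n → ℝ) (hdin : ∀ i, din i = ∑ j ∈ Finset.univ.erase i, G j i) :
    (∀ i ∈ C, c i = 1 / (1 - γ * β)) ∧
    (∀ i ∈ P, c i = (1 + γ * (α - β)) / (1 - γ * β)) ∧
    (∑ i, c i * ((1 - din i) * c i + 2 * din i)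
      = (m * ((1 + γ * (α - β)) ^ 2 - α * (2 * γ * β - 1))
          + l * (1 - β * (2 * γ * β - 1))) / (1 - γ * β) ^ 2) :=
  stmt13_general n l m γ α β hγ hα hβ C P hdisj hunion hcardC hcardP G hpos hdiag hP hcore hperi c
    hc din hdin
end

section
/- Fix n ≥ 1, τ_x > 0, τ_y > 0, and set γ = τ_x/(τ_x+τ_y). Let G be an n×n real matrix with nonnegative entries and zero diagonal, let r_1, …, r_n ∈ (0,1), set d_i^out = Σ_{j≠i} G i j, K_i = 1 − r_i + r_i·d_i^out, and let G̃ be the n×n matrix with entries G̃ i j = r_i·G i j / K_i. Let c = (I − γ·G̃)⁻¹ 𝟙, b_i = (1−γ)·c_i, and d_i^{in,r} = Σ_{j≠i} r_j·G j i. Let ε_1, …, ε_n, ε_0 be jointly independent square-integrable real random variables with mean zero, Var(ε_i) = 1/τ_x for 1 ≤ i ≤ n and Var(ε_0) = 1/τ_y, and define X_i = (1−b_i)·ε_i + b_i·ε_0. Define ΔW = Σ_{i=1}^{n} ( E[−(1−r_i)·X_i² − r_i·Σ_{j≠i} G i j·(X_i − X_j)²] + τ_x⁻¹(1 − r_i +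 2·r_i·d_i^out) ). Then ΔW < 0 if and only if Σ_{i=1}^{n} c_i·( (K_i − d_i^{in,r})·c_i + 2·d_i^{in,r} ) < 0. -/
open Matrix Finset MeasureTheory ProbabilityTheory

/-!
Since the shocks are independent and centred, all expected payoffs are explicit in the weights
`b i`: `E[X_i²] = (1 - b_i)²/τx + b_i²/τy` and `E[(X_i - X_j)²] = E[X_i²] + E[X_j²] - 2 b_i b_j/τy`.
After summing over agents, out-degree terms balance in-degree terms
(`∑ r_i d_i^out = ∑ d_i^{in,r}`), and the cross terms `∑_j G i j b_j` are eliminated by the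
Katz–Bonacich fixed-point equation `c = 𝟙 + γ G̃ c`; it holds because `γ G̃` is strictly
row-substochastic, so `I - γ G̃` is invertible by Gershgorin. What remains is
`ΔW = (1 - γ)/τx · ∑ c_i ((K_i - d_i^{in,r}) c_i + 2 d_i^{in,r})` with a positive factor.
-/

section SecondMoments

variable {Ω ι : Type*} [MeasurableSpace Ω] {μ : Measure Ω}

lemma integral_neg_mul_sq_sub_mul_sum_mul_sq_sub {Y : Ω → ℝ} {X : ι → Ω → ℝ}
    (hY : MemLp Y 2 μ) (hX : ∀ j, MemLp (X j) 2 μ) (α β : ℝ) (s : Finset ι) (g : ι → ℝ) :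
    ∫ ω, (-α * Y ω ^ 2 - β * ∑ j ∈ s, g j * (Y ω - X j ω) ^ 2) ∂μ
      = -α * ∫ ω, Y ω ^ 2 ∂μ - β * ∑ j ∈ s, g j * ∫ ω, (Y ω - X j ω) ^ 2 ∂μ := by
  have hdiff : ∀ j, Integrable (fun ω => (Y ω - X j ω) ^ 2) μ :=
    fun j => (hY.sub (hX j)).integrable_sq
  rw [integral_sub (hY.integrable_sq.const_mul _)
      ((integrable_finsetSum _ fun j _ => (hdiff j).const_mul _).const_mul _),
    integral_const_mul, integral_const_mul, integral_finsetSum _ fun j _ => (hdiff j).const_mul _]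
  simp_rw [integral_const_mul]

variable [IsFiniteMeasure μ] {ε : ι → Ω → ℝ}

lemma integral_sq_sum_mul_eq_sum_sq_mul_variance
    (hindep : Pairwise fun k l => ε k ⟂ᵢ[μ] ε l) (hL2 : ∀ k, MemLp (ε k) 2 μ)
    (hmean : ∀ k, μ[ε k] = 0) (s : Finset ι) (a : ι → ℝ) :
    ∫ ω, (∑ k ∈ s, a k * ε k ω) ^ 2 ∂μ = ∑ k ∈ s, a k ^ 2 * Var[ε k; μ] := by
  have hsum : (fun ω => ∑ k ∈ s, a k * ε k ω) = ∑ k ∈ s, fun ω => a k * ε k ω := by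
    ext ω; simp
  have hL2' : ∀ k, MemLp (fun ω => a k * ε k ω) 2 μ := fun k => (hL2 k).const_mul (a k)
  rw [← variance_of_integral_eq_zero, hsum, IndepFun.variance_sum (fun k _ => hL2' k)]
  · simp_rw [variance_const_mul]
  · exact fun k _ l _ hkl =>
      (hindep hkl).comp (measurable_const_mul (a k)) (measurable_const_mul (a l))
  · exact (memLp_finsetSum s fun k _ => hL2' k).aemeasurable
  · rw [integral_finsetSum s fun k _ => (hL2' k).integrable one_le_two]
    simp [integral_const_mul, hmean]

lemma integral_sq_add_of_pairwise_indepFun (hindep : Pairwise fun k l => ε k ⟂ᵢ[μ] ε l)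
    (hL2 : ∀ k, MemLp (ε k) 2 μ) (hmean : ∀ k, μ[ε k] = 0) {k l : ι} (hkl : k ≠ l) (p q : ℝ) :
    ∫ ω, (p * ε k ω + q * ε l ω) ^ 2 ∂μ = p ^ 2 * Var[ε k; μ] + q ^ 2 * Var[ε l; μ] := by
  classical
  simpa [sum_pair hkl, hkl.symm] using
    integral_sq_sum_mul_eq_sum_sq_mul_variance hindep hL2 hmean {k, l}
      (fun x => if x = k then p else q)

lemma integral_sq_add_add_of_pairwise_indepFun (hindep : Pairwise fun k l => ε k ⟂ᵢ[μ] ε l)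
    (hL2 : ∀ k, MemLp (ε k) 2 μ) (hmean : ∀ k, μ[ε k] = 0) {k l m : ι} (hkl : k ≠ l)
    (hkm : k ≠ m) (hlm : l ≠ m) (p q s : ℝ) :
    ∫ ω, (p * ε k ω + q * ε l ω + s * ε m ω) ^ 2 ∂μ
      = p ^ 2 * Var[ε k; μ] + q ^ 2 * Var[ε l; μ] + s ^ 2 * Var[ε m; μ] := by
  classical
  have hk : k ∉ ({l, m} : Finset ι) := by simp [hkl, hkm]
  simpa [sum_insert hk, sum_pair hlm, hkl.symm, hkm.symm, hlm.symm, add_assoc] using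
    integral_sq_sum_mul_eq_sum_sq_mul_variance hindep hL2 hmean (insert k {l, m})
      (fun x => if x = k then p else if x = l then q else s)

end SecondMoments

theorem Matrix.det_one_sub_ne_zero_of_sum_norm_row_lt_one {K ι : Type*} [NormedField K]
    [Fintype ι] [DecidableEq ι] {A : Matrix ι ι K} (h : ∀ k, ∑ j, ‖A k j‖ < 1) :
    (1 - A).det ≠ 0 := by
  refine det_ne_zero_of_sum_row_lt_diag fun k => ?_
  have hoff : ∑ j ∈ univ.erase k, ‖(1 - A) k j‖ = ∑ j, ‖A k j‖ - ‖A k k‖ := by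
    rw [← sum_erase_eq_sub (mem_univ k)]
    refine sum_congr rfl fun j hj => ?_
    rw [sub_apply, one_apply_ne (ne_of_mem_erase hj).symm, zero_sub, norm_neg]
  have hdiag : 1 - ‖A k k‖ ≤ ‖(1 - A) k k‖ := by
    simpa [sub_apply] using norm_sub_norm_le (1 : K) (A k k)
  linarith [h k]

theorem Matrix.eq_add_mulVec_of_eq_nonsing_inv_one_sub_mulVec {R ι : Type*} [CommRing R]
    [Fintype ι] [DecidableEq ι] {A : Matrix ι ι R} (hA : IsUnit (1 - A).det) {c v : ι → R}
    (hc : c = (1 - A)⁻¹ *ᵥ v) : c = v + A *ᵥ c := by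
  have h : (1 - A) *ᵥ c = v := by
    rw [hc, mulVec_mulVec, mul_nonsing_inv _ hA, one_mulVec]
  rw [← h, sub_mulVec, one_mulVec, sub_add_cancel]

theorem Finset.sum_sum_erase_comm {ι M : Type*} [Fintype ι] [DecidableEq ι] [AddCommMonoid M]
    (f : ι → ι → M) : ∑ i, ∑ j ∈ univ.erase i, f i j = ∑ j, ∑ i ∈ univ.erase j, f i j :=
  sum_comm' fun i j => by simp [eq_comm]

section Network

variable {ι : Type*} [Fintype ι] [DecidableEq ι] {G : Matrix ι ι ℝ} {r dout K : ι → ℝ}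

lemma katz_bonacich_fixed_point {γ : ℝ} (hγ0 : 0 ≤ γ) (hγ1 : γ ≤ 1)
    (hposG : ∀ i j, 0 ≤ G i j) (hdiag : ∀ i, G i i = 0) (hr : ∀ i, r i ∈ Set.Ioo (0 : ℝ) 1)
    (hdout : ∀ i, dout i = ∑ j ∈ univ.erase i, G i j) (hK : ∀ i, K i = 1 - r i + r i * dout i)
    {Gt : Matrix ι ι ℝ} (hGt : ∀ i j, Gt i j = r i * G i j / K i)
    {c : ι → ℝ} (hc : c = (1 - γ • Gt)⁻¹ *ᵥ fun _ => 1) (i : ι) :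
    γ * (r i * ∑ j ∈ univ.erase i, G i j * c j) = K i * (c i - 1) := by
  have hrowsum : ∀ k, ∑ j, G k j = dout k := fun k => by
    rw [hdout k, sum_erase _ (hdiag k)]
  have hdout_nonneg : ∀ k, 0 ≤ dout k := fun k => hdout k ▸ sum_nonneg fun j _ => hposG k j
  have hKpos : ∀ k, 0 < K k := fun k => by
    nlinarith [hK k, (hr k).1, (hr k).2, hdout_nonneg k]
  have hsubstoch : ∀ k, ∑ j, ‖(γ • Gt) k j‖ < 1 := fun k => by
    have hnorm : ∀ j, ‖(γ • Gt) k j‖ = γ * (r k / K k) * G k j := fun j => by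
      have := (hr k).1; have := hposG k j; have := hKpos k
      rw [Matrix.smul_apply, hGt, smul_eq_mul, Real.norm_of_nonneg (by positivity)]
      ring
    have hout : 0 ≤ r k / K k * dout k :=
      mul_nonneg (div_nonneg (hr k).1.le (hKpos k).le) (hdout_nonneg k)
    have hlt : r k / K k * dout k < 1 := by
      rw [div_mul_eq_mul_div, div_lt_one (hKpos k)]
      linarith [hK k, (hr k).2]
    simp_rw [hnorm, ← mul_sum, hrowsum k, mul_assoc]
    exact (mul_le_of_le_one_left hout hγ1).trans_lt hlt
  have hfix := congrFun (eq_add_mulVec_of_eq_nonsing_inv_one_sub_mulVec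
    (det_one_sub_ne_zero_of_sum_norm_row_lt_one hsubstoch).isUnit hc) i
  have hrow : ((γ • Gt) *ᵥ c) i = γ * (r i / K i) * ∑ j, G i j * c j := by
    simp only [mulVec, dotProduct, Matrix.smul_apply, hGt, mul_sum, smul_eq_mul]
    exact sum_congr rfl fun j _ => by ring
  rw [Pi.add_apply, hrow] at hfix
  rw [sum_erase univ (f := fun j => G i j * c j) (by simp [hdiag]), hfix]
  field_simp [(hKpos i).ne']
  ring

lemma sum_mul_sum_erase_eq_sum_inDegree_mul {dinr : ι → ℝ}
    (hdinr : ∀ i, dinr i = ∑ j ∈ univ.erase i, r j * G j i) (f : ι → ℝ) :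
    ∑ i, r i * ∑ j ∈ univ.erase i, G i j * f j = ∑ j, dinr j * f j := by
  calc ∑ i, r i * ∑ j ∈ univ.erase i, G i j * f j
      = ∑ i, ∑ j ∈ univ.erase i, r i * G i j * f j := by simp_rw [mul_sum, mul_assoc]
    _ = ∑ j, ∑ i ∈ univ.erase j, r i * G i j * f j := sum_sum_erase_comm _
    _ = ∑ j, dinr j * f j := by simp_rw [hdinr, sum_mul]

lemma welfare_gain_eq {τx τy γ : ℝ} (hτx : 0 < τx) (hτy : 0 < τy) (hγ : γ = τx / (τx + τy))
    (hdout : ∀ i, dout i = ∑ j ∈ univ.erase i, G i j) (hK : ∀ i, K i = 1 - r i + r i * dout i)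
    {dinr : ι → ℝ} (hdinr : ∀ i, dinr i = ∑ j ∈ univ.erase i, r j * G j i)
    {b c U : ι → ℝ} (hb : ∀ i, b i = (1 - γ) * c i)
    (hfix : ∀ i, γ * (r i * ∑ j ∈ univ.erase i, G i j * c j) = K i * (c i - 1))
    (hU : ∀ i, U i = (1 - b i) ^ 2 / τx + b i ^ 2 / τy) :
    ∑ i, (-(1 - r i) * U i - r i * ∑ j ∈ univ.erase i, G i j * (U i + U j - 2 * b i * b j / τy)
        + τx⁻¹ * (1 - r i + 2 * r i * dout i))
      = (1 - γ) / τx * ∑ i, c i * ((K i - dinr i) * c i + 2 * dinr i) := by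
  have hsplit : ∀ i, ∑ j ∈ univ.erase i, G i j * (U i + U j - 2 * b i * b j / τy)
      = dout i * U i + ∑ j ∈ univ.erase i, G i j * U j
        - 2 * b i / τy * ∑ j ∈ univ.erase i, G i j * b j := fun i => by
    rw [hdout, sum_mul, mul_sum, ← sum_add_distrib, ← sum_sub_distrib]
    exact sum_congr rfl fun j _ => by ring
  have hterm : ∀ i, -(1 - r i) * U i
        - r i * ∑ j ∈ univ.erase i, G i j * (U i + U j - 2 * b i * b j / τy)
        + τx⁻¹ * (1 - r i + 2 * r i * dout i)
      = (1 - γ) / τx * (c i * ((K i - dinr i) * c i + 2 * dinr i))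
        + τx⁻¹ * (r i * dout i - dinr i)
        - (r i * ∑ j ∈ univ.erase i, G i j * U j - dinr i * U i) := by
    intro i
    have hGb : ∑ j ∈ univ.erase i, G i j * b j = (1 - γ) * ∑ j ∈ univ.erase i, G i j * c j := by
      simp_rw [hb, mul_sum]; exact sum_congr rfl fun j _ => by ring
    have hS : r i * ∑ j ∈ univ.erase i, G i j * c j = K i * (c i - 1) * (τx + τy) / τx := by
      rw [eq_div_iff hτx.ne', ← hfix i, hγ]; field_simp
    rw [hK i] at hS
    rw [hsplit, hGb, hU i, hb i, hK i]
    linear_combination (norm := skip) 2 * (1 - γ) ^ 2 * c i / τy * hS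
    rw [hγ]
    field_simp
    ring
  have hout : ∑ i, r i * dout i = ∑ i, dinr i := by
    simpa [← hdout] using sum_mul_sum_erase_eq_sum_inDegree_mul hdinr (fun _ => 1)
  rw [sum_congr rfl fun i _ => hterm i, sum_sub_distrib, sum_add_distrib, ← mul_sum, ← mul_sum,
    sum_sub_distrib, sum_sub_distrib, hout, sum_mul_sum_erase_eq_sum_inDegree_mul hdinr]
  simp

end Network

theorem stmt19_general (n : ℕ) (τx τy : ℝ) (hτx : 0 < τx) (hτy : 0 < τy)
    (γ : ℝ) (hγ : γ = τx / (τx + τy))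
    (G : Matrix (Fin n) (Fin n) ℝ)
    (hposG : ∀ i j, 0 ≤ G i j) (hdiag : ∀ i, G i i = 0)
    (r : Fin n → ℝ) (hr : ∀ i, r i ∈ Set.Ioo (0 : ℝ) 1)
    (dout : Fin n → ℝ) (hdout : ∀ i, dout i = ∑ j ∈ Finset.univ.erase i, G i j)
    (K : Fin n → ℝ) (hK : ∀ i, K i = 1 - r i + r i * dout i)
    (Gt : Matrix (Fin n) (Fin n) ℝ) (hGt : ∀ i j, Gt i j = r i * G i j / K i)
    (c : Fin n → ℝ) (hc : c = (1 - γ • Gt)⁻¹ *ᵥ fun _ => 1)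
    (b : Fin n → ℝ) (hb : ∀ i, b i = (1 - γ) * c i)
    (dinr : Fin n → ℝ) (hdinr : ∀ i, dinr i = ∑ j ∈ Finset.univ.erase i, r j * G j i)
    {Ω : Type*} [MeasurableSpace Ω] (μ : Measure Ω) [IsProbabilityMeasure μ]
    (ε : Option (Fin n) → Ω → ℝ)
    (hindep : iIndepFun ε μ)
    (hL2 : ∀ k, MemLp (ε k) 2 μ)
    (hmean : ∀ k, ∫ ω, ε k ω ∂μ = 0)
    (hvarx : ∀ i : Fin n, variance (ε (some i)) μ = 1 / τx)
    (hvary : variance (ε none) μ = 1 / τy)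
    (X : Fin n → Ω → ℝ)
    (hX : ∀ i ω, X i ω = (1 - b i) * ε (some i) ω + b i * ε none ω)
    (ΔW : ℝ)
    (hΔW : ΔW = ∑ i, ((∫ ω, (-(1 - r i) * (X i ω) ^ 2
          - r i * ∑ j ∈ Finset.univ.erase i, G i j * (X i ω - X j ω) ^ 2) ∂μ)
        + τx⁻¹ * (1 - r i + 2 * r i * dout i))) :
    ΔW < 0 ↔ ∑ i, c i * ((K i - dinr i) * c i + 2 * dinr i) < 0 := by
  have hγ0 : 0 ≤ γ := hγ ▸ by positivity
  have hγ1 : γ < 1 := by rw [hγ, div_lt_one (by positivity)]; linarith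
  have hpair : Pairwise fun k l => ε k ⟂ᵢ[μ] ε l := fun k l hkl => hindep.indepFun hkl
  have hXL2 : ∀ i, MemLp (X i) 2 μ := fun i => by
    rw [funext (hX i)]; exact ((hL2 _).const_mul _).add ((hL2 _).const_mul _)
  have hX2 : ∀ i, ∫ ω, X i ω ^ 2 ∂μ = (1 - b i) ^ 2 / τx + b i ^ 2 / τy := fun i => by
    simp_rw [hX, integral_sq_add_of_pairwise_indepFun hpair hL2 hmean (Option.some_ne_none i),
      hvarx, hvary]
    ring
  have hXsub : ∀ i j, i ≠ j → ∫ ω, (X i ω - X j ω) ^ 2 ∂μ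
      = ((1 - b i) ^ 2 / τx + b i ^ 2 / τy) + ((1 - b j) ^ 2 / τx + b j ^ 2 / τy)
        - 2 * b i * b j / τy := fun i j hij => by
    have hsub : ∀ ω, X i ω - X j ω = (1 - b i) * ε (some i) ω + (-(1 - b j)) * ε (some j) ω
        + (b i - b j) * ε none ω := fun ω => by rw [hX, hX]; ring
    simp_rw [hsub, integral_sq_add_add_of_pairwise_indepFun hpair hL2 hmean
      (Option.some_injective _ |>.ne hij) (Option.some_ne_none i) (Option.some_ne_none j),
      hvarx, hvary]
    ring
  have hΔW' : ΔW = (1 - γ) / τx * ∑ i, c i * ((K i - dinr i) * c i + 2 * dinr i) := by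
    rw [hΔW, ← welfare_gain_eq hτx hτy hγ hdout hK hdinr hb
      (katz_bonacich_fixed_point hγ0 hγ1.le hposG hdiag hr hdout hK hGt hc) (fun i => rfl)]
    refine sum_congr rfl fun i _ => ?_
    rw [integral_neg_mul_sq_sub_mul_sum_mul_sq_sub (hXL2 i) hXL2, hX2,
      sum_congr rfl fun j hj => by rw [hXsub i j (ne_of_mem_erase hj).symm]]
  rw [hΔW', ← not_le, ← not_le, mul_nonneg_iff_of_pos_left (div_pos (by linarith) hτx)]

/-- In the generalized beauty contest with coordination intensities
`r_i`, normalized network `G̃ i j = r_i G i j / K_i` with `K_i = 1 - r_i + r_i d_i^out`,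
the welfare effect of public information is negative (`ΔW < 0`) if and only if
`Σ_i c_i ((K_i - d_i^{in,r}) c_i + 2 d_i^{in,r}) < 0`. -/
theorem stmt19 (n : ℕ) (hn : 1 ≤ n) (τx τy : ℝ) (hτx : 0 < τx) (hτy : 0 < τy)
    (γ : ℝ) (hγ : γ = τx / (τx + τy))
    (G : Matrix (Fin n) (Fin n) ℝ)
    (hposG : ∀ i j, 0 ≤ G i j) (hdiag : ∀ i, G i i = 0)
    (r : Fin n → ℝ) (hr : ∀ i, r i ∈ Set.Ioo (0 : ℝ) 1)
    (dout : Fin n → ℝ) (hdout : ∀ i, dout i = ∑ j ∈ Finset.univ.erase i, G i j)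
    (K : Fin n → ℝ) (hK : ∀ i, K i = 1 - r i + r i * dout i)
    (Gt : Matrix (Fin n) (Fin n) ℝ) (hGt : ∀ i j, Gt i j = r i * G i j / K i)
    (c : Fin n → ℝ) (hc : c = (1 - γ • Gt)⁻¹ *ᵥ fun _ => 1)
    (b : Fin n → ℝ) (hb : ∀ i, b i = (1 - γ) * c i)
    (dinr : Fin n → ℝ) (hdinr : ∀ i, dinr i = ∑ j ∈ Finset.univ.erase i, r j * G j i)
    {Ω : Type*} [MeasurableSpace Ω] (μ : Measure Ω) [IsProbabilityMeasure μ]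
    (ε : Option (Fin n) → Ω → ℝ)
    (hindep : iIndepFun ε μ)
    (hL2 : ∀ k, MemLp (ε k) 2 μ)
    (hmean : ∀ k, ∫ ω, ε k ω ∂μ = 0)
    (hvarx : ∀ i : Fin n, variance (ε (some i)) μ = 1 / τx)
    (hvary : variance (ε none) μ = 1 / τy)
    (X : Fin n → Ω → ℝ)
    (hX : ∀ i ω, X i ω = (1 - b i) * ε (some i) ω + b i * ε none ω)
    (ΔW : ℝ)
    (hΔW : ΔW = ∑ i, ((∫ ω, (-(1 - r i) * (X i ω) ^ 2
          - r i * ∑ j ∈ Finset.univ.erase i, G i j * (X i ω - X j ω) ^ 2) ∂μ)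
        + τx⁻¹ * (1 - r i + 2 * r i * dout i))) :
    ΔW < 0 ↔ ∑ i, c i * ((K i - dinr i) * c i + 2 * dinr i) < 0 :=
  stmt19_general n τx τy hτx hτy γ hγ G hposG hdiag r hr dout hdout K hK Gt hGt c hc b hb dinr hdinr
    μ ε hindep hL2 hmean hvarx hvary X hX ΔW hΔW
end
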